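/- Let ŵ = π_r s_{i_l}⋯s_{i_1} be a reduced decomposition of an element of the extended affine Weyl group Ŵ and let {α̃^1,…,α̃^l} be its λ-sequence. If 1 ≤ q < r ≤ l and α̃ = c₁α̃^q + c₂α̃^r is a positive affine root for some positive rational numbers c₁, c₂ (in particular, if α̃ = α̃^q + α̃^r ∈ R̃_+), then α̃ = α̃^p for some p with q ≤ p ≤ r. -/

import Mathlib

open scoped RealInnerProductSpace Classical

noncomputable section

/-- Euclidean space ℝⁿ. -/
abbrev EV (n : ℕ) := EuclideanSpace ℝ (Fin n)

/-- ν_α = (α,α)/2. -/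
def nuu {n : ℕ} (α : EV n) : ℝ := ⟪α, α⟫ / 2

/-- α^∨ = 2α/(α,α). -/
def coroot {n : ℕ} (α : EV n) : EV n := (2 / ⟪α, α⟫) • α

/-- the reflection s_α. -/
def srefl {n : ℕ} (α : EV n) : EV n → EV n :=
  fun z => z - (2 * ⟪z, α⟫ / ⟪α, α⟫) • α

/-- the affine reflection s_ã attached to ã = [α, ν_α j], acting linearly on ℝⁿ × ℝ. -/
def aRefl {n : ℕ} (p : EV n × ℝ) : EV n × ℝ → EV n × ℝ :=
  fun z => z - (2 * ⟪z.1, p.1⟫ / ⟪p.1, p.1⟫) • p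

/-- the translation element b' ∈ Ŵ, b'([z,ζ]) = [z, ζ − (z,b)]. -/
def transl {n : ℕ} (b : EV n) : EV n × ℝ → EV n × ℝ :=
  fun z => (z.1, z.2 - ⟪z.1, b⟫)

/-- extension of a nonaffine transformation to ℝⁿ × ℝ. -/
def affExt {n : ℕ} (w : EV n → EV n) : EV n × ℝ → EV n × ℝ :=
  fun z => (w z.1, z.2)

/-- An irreducible reduced crystallographic root system in ℝⁿ, with a fixed system of
positive/simple roots, normalized so that (α,α) = 2 for short roots; `hishort` is the
highest short root ϑ and `hiroot` the highest root θ. -/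
structure RootCtx (n : ℕ) where
  R : Finset (EV n)
  pos : Finset (EV n)
  simple : Fin n → EV n
  hishort : EV n
  hiroot : EV n
  nonzero : ∀ α ∈ R, α ≠ (0 : EV n)
  neg_mem : ∀ α ∈ R, -α ∈ R
  reduced : ∀ α ∈ R, ∀ t : ℝ, t • α ∈ R → t = 1 ∨ t = -1
  crys : ∀ α ∈ R, ∀ β ∈ R, ∃ m : ℤ, 2 * ⟪β, α⟫ / ⟪α, α⟫ = (m : ℝ)
  reflect_mem : ∀ α ∈ R, ∀ β ∈ R, β - (2 * ⟪β, α⟫ / ⟪α, α⟫) • α ∈ R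
  span_top : Submodule.span ℝ (R : Set (EV n)) = ⊤
  pos_subset : pos ⊆ R
  pos_iff : ∀ α ∈ R, (α ∈ pos ↔ -α ∉ pos)
  simple_pos : ∀ i, simple i ∈ pos
  simple_inj : Function.Injective simple
  pos_sum : ∀ α ∈ pos, ∃ f : Fin n → ℕ, α = ∑ i, (f i : ℝ) • simple i
  irred : ∀ S : Finset (EV n), S ⊆ R → S.Nonempty →
      (∀ α ∈ S, ∀ β ∈ R, β ∉ S → ⟪α, β⟫ = 0) → S = R
  normalized : ∀ α ∈ R, (∀ β ∈ R, ⟪α, α⟫ ≤ ⟪β, β⟫) → ⟪α, α⟫ = 2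
  hishort_pos : hishort ∈ pos
  hishort_short : ⟪hishort, hishort⟫ = 2
  hishort_high : ∀ α ∈ R, ⟪α, α⟫ = 2 →
      ∃ f : Fin n → ℕ, hishort - α = ∑ i, (f i : ℝ) • simple i
  hiroot_pos : hiroot ∈ pos
  hiroot_high : ∀ α ∈ R, ∃ f : Fin n → ℕ, hiroot - α = ∑ i, (f i : ℝ) • simple i

namespace RootCtx

variable {n : ℕ} (c : RootCtx n)

/-- word in the simple reflections of W; the letters are listed in the order of
application (the first letter of the list acts first), so `[i₁, …, i_l]`
represents s_{i_l} ⋯ s_{i_1}. -/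
def wWord (L : List (Fin n)) : EV n → EV n :=
  L.foldl (fun f i => srefl (c.simple i) ∘ f) id

/-- membership in the Weyl group W. -/
def IsWeyl (w : EV n → EV n) : Prop := ∃ L : List (Fin n), w = c.wWord L

/-- λ(w) = {α ∈ R₊ : w(α) ∈ R₋}. -/
def lamW (w : EV n → EV n) : Finset (EV n) :=
  c.pos.filter (fun α => -(w α) ∈ c.pos)

/-- λ_ν(w). -/
def lamWnu (w : EV n → EV n) (ν : ℝ) : Finset (EV n) :=
  (c.lamW w).filter (fun α => nuu α = ν)

/-- the length l(w) = |λ(w)| of w ∈ W. -/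
def lenW (w : EV n → EV n) : ℕ := (c.lamW w).card

/-- ρ_ν = (1/2) Σ_{α ∈ R₊, ν_α = ν} α. -/
def rho (ν : ℝ) : EV n :=
  (1 / 2 : ℝ) • ∑ α ∈ c.pos.filter (fun α => nuu α = ν), α

/-- ρ_ν^∨ = ρ_ν / ν. -/
def rhoCheck (ν : ℝ) : EV n := ν⁻¹ • c.rho ν

/-- the affine root system R̃ ⊂ ℝⁿ × ℝ. -/
def aR : Set (EV n × ℝ) := {p | ∃ α ∈ c.R, ∃ j : ℤ, p = (α, nuu α * j)}

/-- positive affine roots. -/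
def aPos : Set (EV n × ℝ) :=
  {p | p ∈ c.aR ∧ (0 < p.2 ∨ (p.2 = 0 ∧ p.1 ∈ c.pos))}

/-- negative affine roots. -/
def aNeg : Set (EV n × ℝ) := {p | -p ∈ c.aPos}

/-- the affine simple roots α_0, α_1, …, α_n; the index 0 corresponds to
α₀ = [−ϑ, 1]. -/
def asimple : Fin (n + 1) → EV n × ℝ :=
  fun i => if h : i = 0 then (-c.hishort, (1 : ℝ)) else (c.simple (i.pred h), (0 : ℝ))

/-- the affine simple reflections s_0, s_1, …, s_n. -/
def aS (i : Fin (n + 1)) : EV n × ℝ → EV n × ℝ := aRefl (c.asimple i)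

/-- word in the affine simple reflections (letters in order of application). -/
def affWord (L : List (Fin (n + 1))) : EV n × ℝ → EV n × ℝ :=
  L.foldl (fun f i => c.aS i ∘ f) id

/-- the weight lattice P. -/
def PwSet : Set (EV n) :=
  {b | ∀ i, ∃ m : ℤ, 2 * ⟪b, c.simple i⟫ / ⟪c.simple i, c.simple i⟫ = (m : ℝ)}

/-- the dominant weights P₊. -/
def PplusSet : Set (EV n) :=
  {b | b ∈ c.PwSet ∧ ∀ i, 0 ≤ ⟪b, c.simple i⟫}

/-- membership in the extended affine Weyl group Ŵ = W ⋉ P,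
via the normal form w·b' with w ∈ W and b ∈ P. -/
def IsExtW (f : EV n × ℝ → EV n × ℝ) : Prop :=
  ∃ w b, c.IsWeyl w ∧ b ∈ c.PwSet ∧ f = affExt w ∘ transl b

/-- membership in Π = {π ∈ Ŵ : π(R̃₊) = R̃₊}. -/
def IsPi (f : EV n × ℝ → EV n × ℝ) : Prop :=
  c.IsExtW f ∧ f '' c.aPos = c.aPos

/-- the λ-set λ(ŵ) = R̃₊ ∩ ŵ⁻¹(R̃₋) of an affine transformation. -/
def aLam (f : EV n × ℝ → EV n × ℝ) : Set (EV n × ℝ) :=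
  {p | p ∈ c.aPos ∧ f p ∈ c.aNeg}

/-- the ν-part λ_ν(ŵ). -/
def aLamNu (f : EV n × ℝ → EV n × ℝ) (ν : ℝ) : Set (EV n × ℝ) :=
  {p | p ∈ c.aLam f ∧ nuu p.1 = ν}

/-- the length l(ŵ) = |λ(ŵ)|. -/
def aLen (f : EV n × ℝ → EV n × ℝ) : ℕ := (c.aLam f).ncard

/-- `(π, L)` is a reduced decomposition ŵ = π_r s_{i_l} ⋯ s_{i_1}: π ∈ Π and
the word length is minimal among all such presentations of the same element. -/
def IsReducedA (π : EV n × ℝ → EV n × ℝ) (L : List (Fin (n + 1))) : Prop :=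
  c.IsPi π ∧
    ∀ (π' : EV n × ℝ → EV n × ℝ) (L' : List (Fin (n + 1))),
      c.IsPi π' → π' ∘ c.affWord L' = π ∘ c.affWord L → L.length ≤ L'.length

/-- the λ-sequence α̃¹, α̃², … of a word (0-based indexing):
α̃^{k+1} = s_{i_1} s_{i_2} ⋯ s_{i_k}(α_{i_{k+1}}). -/
def lamSeq (L : List (Fin (n + 1))) (k : Fin L.length) : EV n × ℝ :=
  ((L.take k).foldr (fun i f => c.aS i ∘ f) id) (c.asimple (L.get k))

/-- the λ-sequence of a word in W (0-based indexing). -/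
def lamSeqW (L : List (Fin n)) (k : Fin L.length) : EV n :=
  ((L.take k).foldr (fun i f => srefl (c.simple i) ∘ f) id) (c.simple (L.get k))

end RootCtx

/-!
Let `u_m = affWord (L.take m)` be the product of the first `m` letters of the word, so that
`u_k (α̃^k) = α_{i_k}`. Reducedness makes every `α̃^k` positive (a sign change along the word
would let two letters cancel), and then `u_m (α̃^k)` is negative for `k < m` and positive for
`m ≤ k`. Hence `u_q (α̃) = c₁ u_q (α̃^q) + c₂ u_q (α̃^r)` is a positive combination of positive
affine roots, so it is positive, while `u_{r+1} (α̃)` is a positive combination of negative ones.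
At the step `p ∈ [q, r]` where the sign of `u_p (α̃)` flips, `s_{i_p}` sends the positive root
`u_p (α̃)` to a negative one, so `u_p (α̃) = α_{i_p}`, that is, `α̃ = α̃^p`.
-/

theorem Nat.exists_crossing {p : ℕ → Prop} {a b : ℕ} (hab : a ≤ b) (ha : p a)
    (hb : ¬ p b) : ∃ k, a ≤ k ∧ k < b ∧ p k ∧ ¬ p (k + 1) := by
  induction b, hab using Nat.le_induction with
  | base => exact absurd ha hb
  | succ b hab ih =>
    by_cases hpb : p b
    · exact ⟨b, hab, b.lt_succ_self, hpb, hb⟩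
    · obtain ⟨k, hak, hkb, hk⟩ := ih hpb
      exact ⟨k, hak, hkb.trans b.lt_succ_self, hk⟩

theorem IsLinearMap.comp {R M N P : Type*} [Semiring R] [AddCommMonoid M] [AddCommMonoid N]
    [AddCommMonoid P] [Module R M] [Module R N] [Module R P] {f : N → P} {g : M → N}
    (hf : IsLinearMap R f) (hg : IsLinearMap R g) : IsLinearMap R (f ∘ g) :=
  ((hf.mk' f).comp (hg.mk' g)).isLinear

section Reflection

variable {n : ℕ}

theorem inner_srefl_srefl {a : EV n} (ha : ⟪a, a⟫ ≠ 0) (x y : EV n) :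
    ⟪srefl a x, srefl a y⟫ = ⟪x, y⟫ := by
  simp only [srefl, inner_sub_left, inner_sub_right, real_inner_smul_left,
    real_inner_smul_right, real_inner_comm a y]
  field_simp
  ring

theorem nuu_srefl {a : EV n} (ha : ⟪a, a⟫ ≠ 0) (x : EV n) : nuu (srefl a x) = nuu x := by
  rw [nuu, nuu, inner_srefl_srefl ha]

theorem isLinearMap_aRefl (p : EV n × ℝ) : IsLinearMap ℝ (aRefl p) where
  map_add x y := by
    simp only [aRefl, Prod.fst_add, inner_add_left]
    module
  map_smul a x := by
    simp only [aRefl, Prod.smul_fst, real_inner_smul_left]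
    module

theorem aRefl_self {p : EV n × ℝ} (hp : ⟪p.1, p.1⟫ ≠ 0) : aRefl p p = -p := by
  simp only [aRefl, mul_div_assoc, div_self hp]
  module

theorem aRefl_aRefl {p : EV n × ℝ} (hp : ⟪p.1, p.1⟫ ≠ 0) (z : EV n × ℝ) :
    aRefl p (aRefl p z) = z := by
  simp only [aRefl, Prod.fst_sub, Prod.smul_fst, inner_sub_left, real_inner_smul_left]
  field_simp
  module

theorem IsLinearMap.map_aRefl {f : EV n × ℝ → EV n × ℝ} (hf : IsLinearMap ℝ f)
    (hiso : ∀ x y, ⟪(f x).1, (f y).1⟫ = ⟪x.1, y.1⟫) (p z : EV n × ℝ) :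
    f (aRefl p z) = aRefl (f p) (f z) := by
  simp only [aRefl, hf.map_sub, hf.map_smul, hiso]

end Reflection

namespace RootCtx

variable {n : ℕ} (c : RootCtx n)

theorem hishort_mem : c.hishort ∈ c.R := c.pos_subset c.hishort_pos

theorem simple_mem (i : Fin n) : c.simple i ∈ c.R := c.pos_subset (c.simple_pos i)

theorem two_le_inner_self {α : EV n} (hα : α ∈ c.R) : 2 ≤ ⟪α, α⟫ := by
  obtain ⟨β, hβ, hmin⟩ := c.R.exists_min_image (fun α => ⟪α, α⟫) ⟨_, c.hishort_mem⟩
  exact c.normalized β hβ hmin ▸ hmin α hα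

theorem inner_self_ne_zero {α : EV n} (hα : α ∈ c.R) : ⟪α, α⟫ ≠ 0 := by
  linarith [c.two_le_inner_self hα]

theorem one_le_nuu {α : EV n} (hα : α ∈ c.R) : 1 ≤ nuu α := by
  rw [nuu]; linarith [c.two_le_inner_self hα]

theorem nuu_hishort : nuu c.hishort = 1 := by
  rw [nuu, c.hishort_short]; norm_num

theorem neg_mem_pos_of_notMem_pos {α : EV n} (hα : α ∈ c.R) (h : α ∉ c.pos) :
    -α ∈ c.pos :=
  not_not.1 fun h' => h ((c.pos_iff α hα).2 h')

theorem neg_notMem_pos {α : EV n} (hα : α ∈ c.pos) : -α ∉ c.pos :=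
  (c.pos_iff α (c.pos_subset hα)).1 hα

theorem inner_hishort_eq_int_mul_nuu {α : EV n} (hα : α ∈ c.R) :
    ∃ t : ℤ, ⟪α, c.hishort⟫ = t * nuu α := by
  obtain ⟨t, ht⟩ := c.crys α hα c.hishort c.hishort_mem
  rw [div_eq_iff (c.inner_self_ne_zero hα)] at ht
  exact ⟨t, by rw [nuu, real_inner_comm]; linarith⟩

theorem srefl_hishort {α : EV n} :
    srefl c.hishort α = α - ⟪α, c.hishort⟫ • c.hishort := by
  rw [srefl, c.hishort_short, mul_div_cancel_left₀ _ two_ne_zero]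

def simpleBasis : Module.Basis (Fin n) ℝ (EV n) :=
  basisOfTopLeSpanOfCardEqFinrank c.simple
    (by
      have hpos : ∀ β ∈ c.pos, β ∈ Submodule.span ℝ (Set.range c.simple) := by
        intro β hβ
        obtain ⟨f, rfl⟩ := c.pos_sum β hβ
        exact Submodule.sum_mem _ fun i _ =>
          Submodule.smul_mem _ _ (Submodule.subset_span ⟨i, rfl⟩)
      rw [← c.span_top, Submodule.span_le]
      intro α hα
      by_cases h : α ∈ c.pos
      · exact hpos α h
      · simpa using Submodule.neg_mem _ (hpos _ (c.neg_mem_pos_of_notMem_pos hα h)))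
    (by simp)

theorem coe_simpleBasis : ⇑c.simpleBasis = c.simple :=
  coe_basisOfTopLeSpanOfCardEqFinrank _ _ _

theorem simpleBasis_repr_sum (f : Fin n → ℝ) (j : Fin n) :
    c.simpleBasis.repr (∑ i, f i • c.simple i) j = f j := by
  rw [← c.coe_simpleBasis, c.simpleBasis.repr_sum_self]

theorem simpleBasis_repr_simple (i j : Fin n) :
    c.simpleBasis.repr (c.simple i) j = if i = j then 1 else 0 := by
  rw [← c.coe_simpleBasis, c.simpleBasis.repr_self, Finsupp.single_apply]

theorem repr_nonneg_of_mem_pos {α : EV n} (hα : α ∈ c.pos) (j : Fin n) :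
    0 ≤ c.simpleBasis.repr α j := by
  obtain ⟨f, rfl⟩ := c.pos_sum α hα
  rw [simpleBasis_repr_sum]
  positivity

theorem mem_pos_of_repr_pos {α : EV n} (hα : α ∈ c.R) {j : Fin n}
    (hj : 0 < c.simpleBasis.repr α j) : α ∈ c.pos := by
  by_contra h
  have := c.repr_nonneg_of_mem_pos (c.neg_mem_pos_of_notMem_pos hα h) j
  simp only [map_neg, Finsupp.coe_neg, Pi.neg_apply] at this
  linarith

theorem mem_pos_of_repr_nonneg {α : EV n} (hα : α ∈ c.R)
    (h : ∀ j, 0 ≤ c.simpleBasis.repr α j) : α ∈ c.pos := by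
  by_contra hneg
  have h' := c.repr_nonneg_of_mem_pos (c.neg_mem_pos_of_notMem_pos hα hneg)
  refine c.nonzero α hα (c.simpleBasis.ext_elem fun j => ?_)
  simp only [map_neg, Finsupp.coe_neg, Pi.neg_apply, map_zero, Finsupp.coe_zero,
    Pi.zero_apply] at h' ⊢
  linarith [h j, h' j]

theorem exists_repr_pos_of_ne_simple {α : EV n} (hα : α ∈ c.pos) {i : Fin n}
    (hne : α ≠ c.simple i) : ∃ j ≠ i, 0 < c.simpleBasis.repr α j := by
  obtain ⟨f, hf⟩ := c.pos_sum α hα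
  simp only [hf, simpleBasis_repr_sum, Nat.cast_pos]
  by_contra! h
  have hαi : α = (f i : ℝ) • c.simple i := by
    rw [hf, Finset.sum_eq_single i (fun j _ hj => by simp [Nat.le_zero.1 (h j hj)]) (by simp)]
  rcases c.reduced _ (c.simple_mem i) _ (hαi ▸ c.pos_subset hα) with h1 | h1
  · exact hne (by rw [hαi, h1, one_smul])
  · linarith [(f i).cast_nonneg (α := ℝ)]

theorem srefl_simple_mem_pos {α : EV n} (hα : α ∈ c.pos) {i : Fin n}
    (hne : α ≠ c.simple i) : srefl (c.simple i) α ∈ c.pos := by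
  obtain ⟨j, hji, hj⟩ := c.exists_repr_pos_of_ne_simple hα hne
  refine c.mem_pos_of_repr_pos (c.reflect_mem _ (c.simple_mem i) α (c.pos_subset hα)) (j := j) ?_
  simpa [srefl, c.simpleBasis_repr_simple, Ne.symm hji] using hj

theorem inner_hishort_simple_nonneg (i : Fin n) : 0 ≤ ⟪c.hishort, c.simple i⟫ := by
  have hR := c.reflect_mem _ (c.simple_mem i) _ c.hishort_mem
  obtain ⟨g, hg⟩ := c.hishort_high _ hR <| by
    rw [← srefl, inner_srefl_srefl (c.inner_self_ne_zero (c.simple_mem i)), c.hishort_short]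
  have hi := congrArg (fun v => c.simpleBasis.repr v i) hg
  simp only [sub_sub_cancel, map_smul, c.simpleBasis_repr_simple, c.simpleBasis_repr_sum,
    Finsupp.coe_smul, Pi.smul_apply, smul_eq_mul, if_true, mul_one] at hi
  have : 0 ≤ 2 * ⟪c.hishort, c.simple i⟫ / ⟪c.simple i, c.simple i⟫ :=
    hi ▸ (g i).cast_nonneg
  have hsi : 0 < ⟪c.simple i, c.simple i⟫ := by linarith [c.two_le_inner_self (c.simple_mem i)]
  rw [le_div_iff₀ hsi] at this
  linarith

theorem inner_hishort_nonneg_of_mem_pos {α : EV n} (hα : α ∈ c.pos) :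
    0 ≤ ⟪α, c.hishort⟫ := by
  obtain ⟨f, rfl⟩ := c.pos_sum α hα
  rw [sum_inner]
  refine Finset.sum_nonneg fun i _ => ?_
  rw [real_inner_smul_left, real_inner_comm]
  exact mul_nonneg (Nat.cast_nonneg _) (c.inner_hishort_simple_nonneg i)

theorem neg_nuu_le_inner_hishort {α : EV n} (hα : α ∈ c.R) (hne : α ≠ -c.hishort) :
    -nuu α ≤ ⟪α, c.hishort⟫ := by
  obtain ⟨t, ht⟩ := c.inner_hishort_eq_int_mul_nuu hα
  have hν := c.one_le_nuu hα
  by_contra! hlt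
  have ht2 : (t : ℝ) ≤ -2 := by
    have : t < -1 := by exact_mod_cast (show (t : ℝ) < -1 by nlinarith)
    exact_mod_cast (show t ≤ -2 by omega)
  -- `⟪α, ϑ⟫ ≤ -2 ν_α` forces `‖α + ϑ‖² ≤ 0`
  have hsum : ⟪α + c.hishort, α + c.hishort⟫ ≤ 0 := by
    rw [inner_add_add_self, c.hishort_short, real_inner_comm α c.hishort,
      show ⟪α, α⟫ = 2 * nuu α by rw [nuu]; ring]
    nlinarith
  exact hne <| eq_neg_of_add_eq_zero_left <|
    inner_self_eq_zero.1 (le_antisymm hsum real_inner_self_nonneg)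

theorem nuu_neg (α : EV n) : nuu (-α) = nuu α := by
  rw [nuu, nuu, inner_neg_neg]

theorem fst_mem_of_mem_aR {p : EV n × ℝ} (hp : p ∈ c.aR) : p.1 ∈ c.R := by
  obtain ⟨α, hα, j, rfl⟩ := hp
  exact hα

theorem neg_mem_aR {p : EV n × ℝ} (hp : p ∈ c.aR) : -p ∈ c.aR := by
  obtain ⟨α, hα, j, rfl⟩ := hp
  exact ⟨-α, c.neg_mem α hα, -j, by simp [nuu_neg]⟩

theorem snd_nonneg_of_mem_aPos {p : EV n × ℝ} (hp : p ∈ c.aPos) : 0 ≤ p.2 := by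
  rcases hp.2 with h | h
  · exact h.le
  · exact h.1.ge

theorem fst_mem_pos_of_mem_aPos {p : EV n × ℝ} (hp : p ∈ c.aPos) (h : p.2 = 0) :
    p.1 ∈ c.pos :=
  hp.2.resolve_left (by rw [h]; exact lt_irrefl 0) |>.2

theorem notMem_aNeg_of_mem_aPos {p : EV n × ℝ} (hp : p ∈ c.aPos) : p ∉ c.aNeg := by
  intro hn
  have h0 : p.2 = 0 := le_antisymm (by simpa using c.snd_nonneg_of_mem_aPos hn)
    (c.snd_nonneg_of_mem_aPos hp)
  exact c.neg_notMem_pos (c.fst_mem_pos_of_mem_aPos hp h0)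
    (c.fst_mem_pos_of_mem_aPos hn (by simp [h0]))

theorem mem_aPos_or_mem_aNeg {p : EV n × ℝ} (hp : p ∈ c.aR) :
    p ∈ c.aPos ∨ p ∈ c.aNeg := by
  have hn : -p ∈ c.aR := c.neg_mem_aR hp
  rcases lt_trichotomy p.2 0 with h | h | h
  · exact .inr ⟨hn, .inl (by simpa using h)⟩
  · by_cases hpos : p.1 ∈ c.pos
    · exact .inl ⟨hp, .inr ⟨h, hpos⟩⟩
    · exact .inr ⟨hn, .inr ⟨by simp [h],
        c.neg_mem_pos_of_notMem_pos (c.fst_mem_of_mem_aR hp) hpos⟩⟩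
  · exact .inl ⟨hp, .inl h⟩

theorem mem_aNeg_of_notMem_aPos {p : EV n × ℝ} (hp : p ∈ c.aR) (h : p ∉ c.aPos) :
    p ∈ c.aNeg :=
  (c.mem_aPos_or_mem_aNeg hp).resolve_left h

theorem smul_add_smul_mem_aPos {a b : ℝ} (ha : 0 < a) (hb : 0 < b) {P Q : EV n × ℝ}
    (hP : P ∈ c.aPos) (hQ : Q ∈ c.aPos) (h : a • P + b • Q ∈ c.aR) :
    a • P + b • Q ∈ c.aPos := by
  have hP2 := c.snd_nonneg_of_mem_aPos hP
  have hQ2 := c.snd_nonneg_of_mem_aPos hQ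
  refine ⟨h, ?_⟩
  simp only [Prod.snd_add, Prod.smul_snd, smul_eq_mul, Prod.fst_add, Prod.smul_fst]
  rcases (add_nonneg (mul_nonneg ha.le hP2) (mul_nonneg hb.le hQ2)).lt_or_eq with hlev | hlev
  · exact .inl hlev
  refine .inr ⟨hlev.symm, c.mem_pos_of_repr_nonneg (c.fst_mem_of_mem_aR h) fun j => ?_⟩
  have hP1 := c.repr_nonneg_of_mem_pos (c.fst_mem_pos_of_mem_aPos hP (by nlinarith)) j
  have hQ1 := c.repr_nonneg_of_mem_pos (c.fst_mem_pos_of_mem_aPos hQ (by nlinarith)) j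
  simp only [map_add, map_smul, Finsupp.coe_add, Finsupp.coe_smul, Pi.add_apply, Pi.smul_apply,
    smul_eq_mul]
  positivity

theorem smul_add_smul_mem_aNeg {a b : ℝ} (ha : 0 < a) (hb : 0 < b) {P Q : EV n × ℝ}
    (hP : P ∈ c.aNeg) (hQ : Q ∈ c.aNeg) (h : a • P + b • Q ∈ c.aR) :
    a • P + b • Q ∈ c.aNeg := by
  have e : -(a • P + b • Q) = a • -P + b • -Q := by module
  show -(a • P + b • Q) ∈ c.aPos
  rw [e]
  exact c.smul_add_smul_mem_aPos ha hb hP hQ (e ▸ c.neg_mem_aR h)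

theorem asimple_zero : c.asimple 0 = (-c.hishort, 1) := rfl

theorem asimple_of_ne_zero {i : Fin (n + 1)} (h : i ≠ 0) :
    c.asimple i = (c.simple (i.pred h), 0) := by
  simp [asimple, h]

theorem asimple_fst_mem (i : Fin (n + 1)) : (c.asimple i).1 ∈ c.R := by
  by_cases h : i = 0
  · subst h; exact c.neg_mem _ c.hishort_mem
  · rw [c.asimple_of_ne_zero h]; exact c.simple_mem _

theorem asimple_mem_aPos (i : Fin (n + 1)) : c.asimple i ∈ c.aPos := by
  by_cases h : i = 0
  · subst h
    refine ⟨⟨-c.hishort, c.neg_mem _ c.hishort_mem, 1, ?_⟩, .inl one_pos⟩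
    simp [asimple_zero, nuu_neg, nuu_hishort]
  · rw [c.asimple_of_ne_zero h]
    exact ⟨⟨_, c.simple_mem (i.pred h), 0, by simp⟩, .inr ⟨rfl, c.simple_pos _⟩⟩

theorem aS_zero_apply (p : EV n × ℝ) :
    c.aS 0 p = (srefl c.hishort p.1, p.2 + ⟪p.1, c.hishort⟫) := by
  simp only [aS, asimple_zero, aRefl, srefl, inner_neg_left, inner_neg_right, neg_neg,
    c.hishort_short]
  refine Prod.ext ?_ ?_
  · simp only [Prod.fst_sub, Prod.smul_fst]
    module
  · simp only [Prod.snd_sub, Prod.smul_snd, smul_eq_mul]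
    ring

theorem aS_apply_of_ne_zero {i : Fin (n + 1)} (h : i ≠ 0) (p : EV n × ℝ) :
    c.aS i p = (srefl (c.simple (i.pred h)) p.1, p.2) := by
  simp only [aS, c.asimple_of_ne_zero h, aRefl, srefl]
  refine Prod.ext ?_ ?_ <;> simp

theorem isLinearMap_aS (i : Fin (n + 1)) : IsLinearMap ℝ (c.aS i) := isLinearMap_aRefl _

theorem inner_aS_fst (i : Fin (n + 1)) (x y : EV n × ℝ) :
    ⟪(c.aS i x).1, (c.aS i y).1⟫ = ⟪x.1, y.1⟫ :=
  inner_srefl_srefl (c.inner_self_ne_zero (c.asimple_fst_mem i)) _ _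

theorem aS_aS (i : Fin (n + 1)) (z : EV n × ℝ) : c.aS i (c.aS i z) = z :=
  aRefl_aRefl (c.inner_self_ne_zero (c.asimple_fst_mem i)) z

theorem aS_asimple (i : Fin (n + 1)) : c.aS i (c.asimple i) = -c.asimple i :=
  aRefl_self (c.inner_self_ne_zero (c.asimple_fst_mem i))

theorem aS_mem_aR (i : Fin (n + 1)) {p : EV n × ℝ} (hp : p ∈ c.aR) : c.aS i p ∈ c.aR := by
  obtain ⟨α, hα, j, rfl⟩ := hp
  by_cases h : i = 0
  · subst h
    obtain ⟨t, ht⟩ := c.inner_hishort_eq_int_mul_nuu hα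
    refine ⟨_, c.reflect_mem _ c.hishort_mem α hα, j + t, ?_⟩
    rw [c.aS_zero_apply, ← srefl, nuu_srefl (c.inner_self_ne_zero c.hishort_mem), ht]
    push_cast
    ring_nf
  · refine ⟨_, c.reflect_mem _ (c.simple_mem (i.pred h)) α hα, j, ?_⟩
    rw [c.aS_apply_of_ne_zero h, ← srefl, nuu_srefl (c.inner_self_ne_zero (c.simple_mem _))]

theorem eq_asimple_zero_of_aS_zero_mem_aNeg {p : EV n × ℝ} (hp : p ∈ c.aPos)
    (hs : c.aS 0 p ∈ c.aNeg) : p = c.asimple 0 := by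
  -- `s₀ [α, ν_α j] = [s_ϑ α, ν_α j + ⟪α, ϑ⟫]`, and the level drops by more than `ν_α`
  -- only for `α = -ϑ`.
  obtain ⟨⟨α, hα, j, rfl⟩, hlev⟩ := hp
  rw [c.aS_zero_apply] at hs
  dsimp only at hs hlev
  have hν := c.one_le_nuu hα
  have hlev' : nuu α * j + ⟪α, c.hishort⟫ ≤ 0 := by
    have := c.snd_nonneg_of_mem_aPos hs
    simp only [Prod.snd_neg] at this
    linarith
  have hflip : nuu α * j + ⟪α, c.hishort⟫ = 0 → 0 ≤ ⟪α, c.hishort⟫ := fun h0 => by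
    have h := c.inner_hishort_nonneg_of_mem_pos
      (c.fst_mem_pos_of_mem_aPos hs (by simp only [Prod.snd_neg, h0, neg_zero]))
    rw [Prod.fst_neg, srefl_hishort, inner_neg_left, inner_sub_left, real_inner_smul_left,
      c.hishort_short] at h
    linarith
  have hj : 0 < nuu α * j → (1 : ℝ) ≤ j := fun h => by
    have : (0 : ℝ) < j := pos_of_mul_pos_right h (by linarith)
    exact_mod_cast (show 0 < j by exact_mod_cast this)
  rcases eq_or_ne α (-c.hishort) with rfl | hne
  · rw [nuu_neg, nuu_hishort, one_mul] at hlev hlev' hflip hj ⊢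
    rw [inner_neg_left, c.hishort_short] at hlev' hflip
    have hj1 : (1 : ℝ) ≤ j :=
      hj <| hlev.resolve_right fun h => c.neg_notMem_pos c.hishort_pos h.2
    have : (j : ℝ) = 1 := by
      rcases hlev'.lt_or_eq with h | h
      · have : j < 2 := by exact_mod_cast (show (j : ℝ) < 2 by linarith)
        have : 1 ≤ j := by exact_mod_cast hj1
        exact_mod_cast (show j = 1 by omega)
      · linarith [hflip h]
    rw [asimple_zero, this]
  · exfalso
    have hk := c.neg_nuu_le_inner_hishort hα hne
    rcases hlev with hpos | ⟨h0, hαpos⟩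
    · nlinarith [hj hpos, hflip (by nlinarith [hj hpos])]
    · have hk0 : ⟪α, c.hishort⟫ = 0 :=
        le_antisymm (by linarith) (c.inner_hishort_nonneg_of_mem_pos hαpos)
      have := c.fst_mem_pos_of_mem_aPos hs (by simp only [Prod.snd_neg, h0, hk0]; norm_num)
      rw [Prod.fst_neg, srefl_hishort, hk0, zero_smul, sub_zero] at this
      exact c.neg_notMem_pos hαpos this

theorem eq_asimple_of_aS_mem_aNeg {i : Fin (n + 1)} {p : EV n × ℝ} (hp : p ∈ c.aPos)
    (hs : c.aS i p ∈ c.aNeg) : p = c.asimple i := by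
  by_cases h : i = 0
  · subst h
    exact c.eq_asimple_zero_of_aS_zero_mem_aNeg hp hs
  rw [c.aS_apply_of_ne_zero h] at hs
  have h0 : p.2 = 0 := le_antisymm (by simpa using c.snd_nonneg_of_mem_aPos hs)
    (c.snd_nonneg_of_mem_aPos hp)
  rw [c.asimple_of_ne_zero h, Prod.ext_iff, h0]
  refine ⟨not_not.1 fun hne => c.neg_notMem_pos ?_ (c.fst_mem_pos_of_mem_aPos hs (by simp [h0])),
    rfl⟩
  exact c.srefl_simple_mem_pos (c.fst_mem_pos_of_mem_aPos hp h0) hne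

theorem aS_mem_aPos {i : Fin (n + 1)} {p : EV n × ℝ} (hp : p ∈ c.aPos)
    (hne : p ≠ c.asimple i) : c.aS i p ∈ c.aPos :=
  not_not.1 fun h => hne <|
    c.eq_asimple_of_aS_mem_aNeg hp (c.mem_aNeg_of_notMem_aPos (c.aS_mem_aR i hp.1) h)

theorem aS_mem_aNeg {i : Fin (n + 1)} {p : EV n × ℝ} (hp : p ∈ c.aNeg)
    (hne : p ≠ -c.asimple i) : c.aS i p ∈ c.aNeg := by
  show -c.aS i p ∈ c.aPos
  rw [← (c.isLinearMap_aS i).map_neg]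
  exact c.aS_mem_aPos hp fun h => hne (neg_eq_iff_eq_neg.1 h)

-- By definition `lamSeq L k = affWordInv (L.take k) (asimple L[k])`.
def affWordInv (K : List (Fin (n + 1))) : EV n × ℝ → EV n × ℝ :=
  K.foldr (fun i f => c.aS i ∘ f) id

theorem affWordInv_cons (i : Fin (n + 1)) (K : List (Fin (n + 1))) :
    c.affWordInv (i :: K) = c.aS i ∘ c.affWordInv K := rfl

theorem foldl_comp_aS (K : List (Fin (n + 1))) (h : EV n × ℝ → EV n × ℝ) :
    K.foldl (fun f i => c.aS i ∘ f) h = c.affWord K ∘ h := by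
  induction K generalizing h with
  | nil => rfl
  | cons i K ih =>
    rw [List.foldl_cons, ih]
    conv_rhs => rw [affWord, List.foldl_cons, ih]
    rfl

theorem affWord_append (K K' : List (Fin (n + 1))) :
    c.affWord (K ++ K') = c.affWord K' ∘ c.affWord K := by
  rw [affWord, List.foldl_append, foldl_comp_aS]; rfl

theorem affWord_cons (i : Fin (n + 1)) (K : List (Fin (n + 1))) :
    c.affWord (i :: K) = c.affWord K ∘ c.aS i :=
  c.affWord_append [i] K

theorem affWord_concat (K : List (Fin (n + 1))) (i : Fin (n + 1)) :
    c.affWord (K ++ [i]) = c.aS i ∘ c.affWord K :=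
  c.affWord_append K [i]

theorem affWordInv_affWord (K : List (Fin (n + 1))) (z : EV n × ℝ) :
    c.affWordInv K (c.affWord K z) = z := by
  induction K generalizing z with
  | nil => rfl
  | cons i K ih => simp [affWord_cons, affWordInv_cons, ih, aS_aS]

theorem affWord_affWordInv (K : List (Fin (n + 1))) (z : EV n × ℝ) :
    c.affWord K (c.affWordInv K z) = z := by
  induction K generalizing z with
  | nil => rfl
  | cons i K ih => simp [affWord_cons, affWordInv_cons, ih, aS_aS]

theorem isLinearMap_affWord (K : List (Fin (n + 1))) : IsLinearMap ℝ (c.affWord K) := by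
  induction K with
  | nil => exact LinearMap.id.isLinear
  | cons i K ih => rw [affWord_cons]; exact ih.comp (c.isLinearMap_aS i)

theorem isLinearMap_affWordInv (K : List (Fin (n + 1))) : IsLinearMap ℝ (c.affWordInv K) := by
  induction K with
  | nil => exact LinearMap.id.isLinear
  | cons i K ih => rw [affWordInv_cons]; exact (c.isLinearMap_aS i).comp ih

theorem inner_affWordInv_fst (K : List (Fin (n + 1))) (x y : EV n × ℝ) :
    ⟪(c.affWordInv K x).1, (c.affWordInv K y).1⟫ = ⟪x.1, y.1⟫ := by
  induction K with
  | nil => rfl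
  | cons i K ih => simp only [affWordInv_cons, Function.comp_apply, inner_aS_fst, ih]

theorem affWord_mem_aR (K : List (Fin (n + 1))) {p : EV n × ℝ} (hp : p ∈ c.aR) :
    c.affWord K p ∈ c.aR := by
  induction K generalizing p with
  | nil => exact hp
  | cons i K ih => rw [affWord_cons]; exact ih (c.aS_mem_aR i hp)

theorem affWordInv_mem_aR (K : List (Fin (n + 1))) {p : EV n × ℝ} (hp : p ∈ c.aR) :
    c.affWordInv K p ∈ c.aR := by
  induction K with
  | nil => exact hp
  | cons i K ih => exact c.aS_mem_aR i ih

theorem affWord_cons_append_singleton {g₁ g₂ : Fin (n + 1)} {K : List (Fin (n + 1))}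
    (h : c.affWordInv K (c.asimple g₂) = c.asimple g₁) :
    c.affWord (g₁ :: (K ++ [g₂])) = c.affWord K := by
  -- the word `K` conjugates `s_{g₁}` into `s_{g₂}`
  have hconj (z : EV n × ℝ) : c.affWord K (c.aS g₁ z) = c.aS g₂ (c.affWord K z) := by
    have := (c.isLinearMap_affWordInv K).map_aRefl (c.inner_affWordInv_fst K) (c.asimple g₂)
      (c.affWord K z)
    rw [h, c.affWordInv_affWord] at this
    rw [aS, ← this, affWord_affWordInv, aS]
  funext z
  rw [affWord_cons, affWord_concat]
  simp only [Function.comp_apply, hconj, aS_aS]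

theorem IsReducedA.affWordInv_asimple_ne {c : RootCtx n} {π : EV n × ℝ → EV n × ℝ}
    {K₁ K K₂ : List (Fin (n + 1))} {g₁ g₂ : Fin (n + 1)}
    (hred : c.IsReducedA π (K₁ ++ g₁ :: (K ++ g₂ :: K₂))) :
    c.affWordInv K (c.asimple g₂) ≠ c.asimple g₁ := by
  intro h
  have hword : c.affWord (K₁ ++ g₁ :: (K ++ g₂ :: K₂)) = c.affWord (K₁ ++ K ++ K₂) := by
    rw [show K₁ ++ g₁ :: (K ++ g₂ :: K₂) = K₁ ++ g₁ :: (K ++ [g₂]) ++ K₂ by simp]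
    simp only [affWord_append, c.affWord_cons_append_singleton h]
  have := hred.2 π (K₁ ++ K ++ K₂) hred.1 (by rw [hword])
  simp at this

variable {L : List (Fin (n + 1))}

theorem affWord_take_succ {k : ℕ} (hk : k < L.length) (z : EV n × ℝ) :
    c.affWord (L.take (k + 1)) z = c.aS L[k] (c.affWord (L.take k) z) := by
  rw [List.take_succ_eq_append_getElem hk, affWord_concat]
  rfl

theorem affWord_take_lamSeq (k : Fin L.length) :
    c.affWord (L.take k) (c.lamSeq L k) = c.asimple L[(k : ℕ)] :=
  c.affWord_affWordInv _ _

theorem lamSeq_eq_of_affWord_take_eq {k : Fin L.length} {x : EV n × ℝ}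
    (h : c.affWord (L.take k) x = c.asimple L[(k : ℕ)]) : c.lamSeq L k = x := by
  rw [← c.affWordInv_affWord (L.take k) x, h]
  rfl

theorem affWord_take_ne_neg_asimple (hpos : ∀ k, c.lamSeq L k ∈ c.aPos) {x : EV n × ℝ}
    (hx : x ∈ c.aPos) (k : Fin L.length) :
    c.affWord (L.take k) x ≠ -c.asimple L[(k : ℕ)] := by
  intro h
  have hx' : x = -c.lamSeq L k := by
    rw [← c.affWordInv_affWord (L.take k) x, h, (c.isLinearMap_affWordInv _).map_neg]
    rfl
  exact c.notMem_aNeg_of_mem_aPos (hpos k) (show -c.lamSeq L k ∈ c.aPos from hx' ▸ hx)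

theorem affWord_take_lamSeq_mem_aNeg (hpos : ∀ k, c.lamSeq L k ∈ c.aPos) (q : Fin L.length)
    {m : ℕ} (hqm : q < m) (hm : m ≤ L.length) :
    c.affWord (L.take m) (c.lamSeq L q) ∈ c.aNeg := by
  induction m, hqm using Nat.le_induction with
  | base =>
    rw [c.affWord_take_succ q.2, affWord_take_lamSeq, aS_asimple]
    simpa [aNeg] using c.asimple_mem_aPos L[(q : ℕ)]
  | succ m hqm ih =>
    rw [c.affWord_take_succ hm]
    exact c.aS_mem_aNeg (ih (by omega)) (c.affWord_take_ne_neg_asimple hpos (hpos q) ⟨m, hm⟩)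

theorem affWord_take_lamSeq_mem_aPos (hpos : ∀ k, c.lamSeq L k ∈ c.aPos) (r : Fin L.length)
    {m : ℕ} (hm : m ≤ r) : c.affWord (L.take m) (c.lamSeq L r) ∈ c.aPos := by
  induction hm using Nat.decreasingInduction with
  | self => exact c.affWord_take_lamSeq r ▸ c.asimple_mem_aPos L[(r : ℕ)]
  | of_succ m hmr ih =>
    have hmL : m < L.length := by omega
    rw [← c.aS_aS L[m] (c.affWord _ _), ← c.affWord_take_succ hmL]
    refine c.aS_mem_aPos ih fun h => c.affWord_take_ne_neg_asimple hpos (hpos r) ⟨m, hmL⟩ ?_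
    rw [← c.aS_aS L[m] (c.affWord _ _), ← c.affWord_take_succ hmL, h, aS_asimple]

theorem lamSeq_eq_of_affWord_take_mem_aPos {x : EV n × ℝ} (hx : x ∈ c.aR) (k : Fin L.length)
    (h : c.affWord (L.take k) x ∈ c.aPos) (h' : c.affWord (L.take (k + 1)) x ∉ c.aPos) :
    c.lamSeq L k = x := by
  refine c.lamSeq_eq_of_affWord_take_eq (c.eq_asimple_of_aS_mem_aNeg h ?_)
  rw [← c.affWord_take_succ k.2]
  exact c.mem_aNeg_of_notMem_aPos (c.affWord_mem_aR _ hx) h'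

theorem lamSeq_mem_aPos {π : EV n × ℝ → EV n × ℝ} (hred : c.IsReducedA π L)
    (k : Fin L.length) : c.lamSeq L k ∈ c.aPos := by
  -- Undo the letters before position `k` one at a time: the sign of the image of `α_{L[k]}`
  -- can only change at a simple root, and that would let two letters of `L` cancel.
  by_contra hneg
  set M := L.take k with hM
  set g := L[(k : ℕ)] with hg
  set y : ℕ → EV n × ℝ := fun i => c.affWordInv (M.drop i) (c.asimple g) with hy
  have hMlen : M.length = k := by simp [hM]
  have hlast : ¬ y k ∉ c.aPos := by
    simp only [hy, ← hMlen, List.drop_length, not_not]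
    exact c.asimple_mem_aPos g
  obtain ⟨i, -, hik, hi, hi1⟩ :=
    Nat.exists_crossing (p := fun i => y i ∉ c.aPos) (Nat.zero_le k) hneg hlast
  have hiM : i < M.length := by omega
  have hyi : y i = c.aS M[i] (y (i + 1)) := by
    simp only [hy]
    rw [List.drop_eq_getElem_cons hiM]
    rfl
  have hroot : y (i + 1) = c.asimple M[i] := c.eq_asimple_of_aS_mem_aNeg (not_not.1 hi1) <|
    hyi ▸ c.mem_aNeg_of_notMem_aPos (c.affWordInv_mem_aR _ (c.asimple_mem_aPos _).1) hi
  have hL : L = M.take i ++ M[i] :: (M.drop (i + 1) ++ g :: L.drop (k + 1)) := by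
    have hsplitM : M.take i ++ M[i] :: M.drop (i + 1) = M := by
      rw [← List.drop_eq_getElem_cons hiM, List.take_append_drop]
    conv_lhs => rw [← List.take_append_drop k L, List.drop_eq_getElem_cons k.2, ← hM, ← hg,
      ← hsplitM]
    simp only [List.append_assoc, List.cons_append]
  exact (hL ▸ hred).affWordInv_asimple_ne hroot

end RootCtx

open RootCtx in
/-- Let ŵ = π_r s_{i_l}⋯s_{i_1} be a reduced decomposition in Ŵ, with
λ-sequence {α̃¹,…,α̃^l}.  If `q < r` (0-based indices) and
α̃ = c₁·α̃^q + c₂·α̃^r is a positive affine root for positive rationals c₁, c₂,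
then α̃ = α̃^p for some p between q and r. -/
theorem lamSeq_convex {n : ℕ} (c : RootCtx n)
    (π : EV n × ℝ → EV n × ℝ) (L : List (Fin (n + 1)))
    (hred : c.IsReducedA π L)
    (q r : Fin L.length) (hqr : q < r)
    (c₁ c₂ : ℚ) (hc₁ : 0 < c₁) (hc₂ : 0 < c₂)
    (A : EV n × ℝ)
    (hA : A = (c₁ : ℝ) • c.lamSeq L q + (c₂ : ℝ) • c.lamSeq L r)
    (hApos : A ∈ c.aPos) :
    ∃ p : Fin L.length, q ≤ p ∧ p ≤ r ∧ c.lamSeq L p = A := by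
  have hpos := c.lamSeq_mem_aPos hred
  have hc₁' : (0 : ℝ) < c₁ := by exact_mod_cast hc₁
  have hc₂' : (0 : ℝ) < c₂ := by exact_mod_cast hc₂
  have hu (m : ℕ) : c.affWord (L.take m) A =
      (c₁ : ℝ) • c.affWord (L.take m) (c.lamSeq L q) +
        (c₂ : ℝ) • c.affWord (L.take m) (c.lamSeq L r) := by
    rw [hA, (c.isLinearMap_affWord _).map_add, (c.isLinearMap_affWord _).map_smul,
      (c.isLinearMap_affWord _).map_smul]
  have hroot (m : ℕ) := hu m ▸ c.affWord_mem_aR (L.take m) hApos.1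
  have hstart : c.affWord (L.take q) A ∈ c.aPos := hu q ▸
    c.smul_add_smul_mem_aPos hc₁' hc₂' (c.affWord_take_lamSeq q ▸ c.asimple_mem_aPos _)
      (c.affWord_take_lamSeq_mem_aPos hpos r hqr.le) (hroot q)
  have hend : c.affWord (L.take (r + 1)) A ∈ c.aNeg := hu (r + 1) ▸
    c.smul_add_smul_mem_aNeg hc₁' hc₂' (c.affWord_take_lamSeq_mem_aNeg hpos q (by omega) r.2)
      (c.affWord_take_lamSeq_mem_aNeg hpos r (by omega) r.2) (hroot (r + 1))
  obtain ⟨p, hqp, hpr, hp, hp1⟩ := Nat.exists_crossing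
    (p := fun m => c.affWord (L.take m) A ∈ c.aPos) (by omega : (q : ℕ) ≤ r + 1) hstart
    fun h => c.notMem_aNeg_of_mem_aPos h hend
  exact ⟨⟨p, by omega⟩, hqp, Nat.lt_succ_iff.1 hpr,
    c.lamSeq_eq_of_affWord_take_mem_aPos hApos.1 ⟨p, by omega⟩ hp hp1⟩
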